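/- Let R be a commutative ring containing the rationals in which the only idempotents are 0 and 1. Then every weak convolution family (f_n)_{n≥0} in R[[x]] is in fact a convolution family: if ∑_{k=0}^n f_k(x) f_{n-k}(x) = f_n(2x) holds in R[[x]] for all n ≥ 0, then ∑_{k=0}^n f_k(x) f_{n-k}(y) = f_n(x+y) holds in R[[x,y]] for all n ≥ 0. -/

import Mathlib

/-!
Write `A m = ∑ₙ [xᵐ]fₙ · tⁿ ∈ R⟦t⟧`. Comparing coefficients of `xᵐ`, the weak convolution identity
says `∑_{p+q=m} A_p A_q = 2ᵐ A_m`, and the convolution identity says `A_i A_j = C(i+j, i) A_{i+j}`.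
For `B_m = m! A_m` the first becomes `∑_{p+q=m} C(m, p) B_p B_q = 2ᵐ B_m`, which determines `B`
from `B_0` and `B_1`: the terms with `p, q ≠ 0` involve only earlier values, and the other two add
up to `2 B_0 B_m` with `B_0` idempotent, so that `2ᵐ - 2 B_0` is invertible for `m ≥ 2`.
Since `A_0 A_1 = A_1` (the case `m = 1`), the sequence `A_0 A_1ᵐ` is a solution with the same first
two terms, hence `m! A_m = A_0 A_1ᵐ`, and the convolution identity follows from
`(A_0 A_1ⁱ)(A_0 A_1ʲ) = A_0 A_1^{i+j}`.
-/

noncomputable section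

open PowerSeries

/-- The embedding of `R[[t]]` into the two-variable power series ring `R[[x,t]]`
(where `x` is variable `0` and `t` is variable `1`), sending `t ↦ t`. -/
def tEmb {R : Type*} [CommRing R] (Ψ : PowerSeries R) : MvPowerSeries (Fin 2) R :=
  fun e => if e 0 = 0 then PowerSeries.coeff (e 1) Ψ else 0

/-- Substitution of a multivariate power series `a` (intended to have zero constant
term) for the variable of a univariate power series `f`:  `f(a) = ∑ₙ fₙ aⁿ`.
When the constant term of `a` is zero, the coefficient of a monomial `e` in `aⁿ`
vanishes whenever `n` exceeds the total degree of `e`, so the finite sum below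
computes the genuine substitution `∑ₙ fₙ aⁿ`. -/
def psubst {R : Type*} [CommRing R] {σ : Type*} (a : MvPowerSeries σ R)
    (f : PowerSeries R) : MvPowerSeries σ R :=
  fun e => ∑ n ∈ Finset.range ((e.sum fun _ m => m) + 1),
    PowerSeries.coeff n f * MvPowerSeries.coeff e (a ^ n)

/-- The formal power series `e^{xΨ(t)} ∈ R[[x,t]]`, where `x` is variable `0`
and `t` is variable `1`.  It is well defined since `x·Ψ(t)` has zero constant term. -/
def expXPsi {R : Type*} [CommRing R] [Algebra ℚ R] (Ψ : PowerSeries R) :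
    MvPowerSeries (Fin 2) R :=
  psubst (MvPowerSeries.X 0 * tEmb Ψ) (PowerSeries.exp R)

/-- `f_n(x) = [tⁿ] e^{xΨ(t)} ∈ R[[x]]`: the coefficient of `tⁿ` in `e^{xΨ(t)}`,
as a power series in `x`. -/
def convFam {R : Type*} [CommRing R] [Algebra ℚ R] (Ψ : PowerSeries R) (n : ℕ) :
    PowerSeries R :=
  PowerSeries.mk fun m =>
    MvPowerSeries.coeff (Finsupp.single 0 m + Finsupp.single 1 n) (expXPsi Ψ)

open Finset

theorem Finsupp.single_add_single_inj {σ M : Type*} [AddZeroClass M] {s t : σ} (hst : s ≠ t)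
    {a b c d : M} :
    single s a + single t b = single s c + single t d ↔ a = c ∧ b = d := by
  refine ⟨fun h => ⟨?_, ?_⟩, fun h => by rw [h.1, h.2]⟩
  · simpa [hst, hst.symm] using DFunLike.congr_fun h s
  · simpa [hst, hst.symm] using DFunLike.congr_fun h t

theorem Finset.Nat.sum_antidiagonal_add_two {M : Type*} [AddCommMonoid M] (f : ℕ × ℕ → M)
    (k : ℕ) :
    ∑ p ∈ antidiagonal (k + 2), f p =
      f (0, k + 2) + f (k + 2, 0) + ∑ p ∈ antidiagonal k, f (p.1 + 1, p.2 + 1) := by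
  rw [Nat.sum_antidiagonal_succ, Nat.sum_antidiagonal_succ']
  exact (add_assoc _ _ _).symm

section Subst

variable {R σ : Type*} [CommRing R]

theorem coeff_psubst_X [DecidableEq σ] (s : σ) (g : PowerSeries R) (e : σ →₀ ℕ) :
    MvPowerSeries.coeff e (psubst (MvPowerSeries.X s) g) =
      if e = Finsupp.single s (e s) then coeff (e s) g else 0 := by
  change ∑ n ∈ range _, _ = _
  simp_rw [MvPowerSeries.coeff_X_pow, mul_ite, mul_one, mul_zero]
  split_ifs with he
  · rw [sum_eq_single (e s)]
    · rw [if_pos he]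
    · intro n _ hn
      rw [if_neg]
      rintro rfl
      simp at hn
    · conv_lhs => rw [he]
      simp
  · refine sum_eq_zero fun n _ => if_neg ?_
    rintro rfl
    simp at he

theorem coeff_psubst_X_mul_psubst_X {s t : σ} (hst : s ≠ t) (g h : PowerSeries R) (i j : ℕ) :
    MvPowerSeries.coeff (Finsupp.single s i + Finsupp.single t j)
        (psubst (MvPowerSeries.X s) g * psubst (MvPowerSeries.X t) h) =
      coeff i g * coeff j h := by
  classical
  rw [MvPowerSeries.coeff_mul, sum_eq_single (Finsupp.single s i, Finsupp.single t j)]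
  · simp [coeff_psubst_X]
  · rintro ⟨u, v⟩ huv hne
    rw [HasAntidiagonal.mem_antidiagonal] at huv
    dsimp only at huv hne ⊢
    rw [coeff_psubst_X, coeff_psubst_X]
    split_ifs with hu hv
    · rw [hu, hv, Finsupp.single_add_single_inj hst] at huv
      exact absurd (by rw [hu, hv, huv.1, huv.2]) hne
    all_goals simp only [mul_zero, zero_mul]
  · simp

theorem coeff_X_add_X_pow {s t : σ} (hst : s ≠ t) (i j n : ℕ) :
    MvPowerSeries.coeff (Finsupp.single s i + Finsupp.single t j)
        ((MvPowerSeries.X s + MvPowerSeries.X t : MvPowerSeries σ R) ^ n) =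
      if i + j = n then (n.choose i : R) else 0 := by
  classical
  have hpair (p : ℕ × ℕ) : (i = p.1 ∧ j = p.2) ↔ (i, j) = p := by rw [Prod.ext_iff]
  rw [(Commute.all _ _).add_pow', map_sum]
  simp_rw [MvPowerSeries.X_pow_eq, MvPowerSeries.monomial_mul_monomial, mul_one, ← map_nsmul,
    MvPowerSeries.coeff_monomial, Finsupp.single_add_single_inj hst, hpair, sum_ite_eq,
    HasAntidiagonal.mem_antidiagonal, nsmul_one]

theorem coeff_psubst_X_add_X {s t : σ} (hst : s ≠ t) (g : PowerSeries R) (i j : ℕ) :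
    MvPowerSeries.coeff (Finsupp.single s i + Finsupp.single t j)
        (psubst (MvPowerSeries.X s + MvPowerSeries.X t) g) =
      (i + j).choose i * coeff (i + j) g := by
  change ∑ n ∈ range _, _ = _
  simp_rw [coeff_X_add_X_pow hst, mul_ite, mul_zero, sum_ite_eq, mul_comm]
  rw [if_pos]
  simp [Finsupp.sum_add_index']

end Subst

section BinomialRecurrence

variable {S : Type*} [CommRing S]
open Nat

theorem binomial_recurrence_mul_pow {e : S} (he : IsIdempotentElem e) (a : S) (m : ℕ) :
    ∑ p ∈ antidiagonal m, m.choose p.1 * ((e * a ^ p.1) * (e * a ^ p.2)) =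
      2 ^ m * (e * a ^ m) := by
  have hterm (p : ℕ × ℕ) : (m.choose p.1 : S) * ((e * a ^ p.1) * (e * a ^ p.2)) =
      e * (m.choose p.1 • (a ^ p.1 * a ^ p.2)) := by
    rw [nsmul_eq_mul]
    linear_combination (m.choose p.1 * a ^ p.1 * a ^ p.2) * he.eq
  rw [sum_congr rfl fun p _ => hterm p, ← mul_sum, ← (Commute.refl a).add_pow', ← two_mul,
    mul_pow]
  ring

theorem binomial_recurrence_factorial_mul {A : ℕ → S}
    (hA : ∀ m, ∑ p ∈ antidiagonal m, A p.1 * A p.2 = 2 ^ m * A m) (m : ℕ) :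
    ∑ p ∈ antidiagonal m, m.choose p.1 * ((p.1 ! * A p.1) * (p.2 ! * A p.2)) =
      2 ^ m * (m ! * A m) := by
  rw [mul_left_comm, ← hA, mul_sum]
  refine sum_congr rfl fun p hp => ?_
  rw [HasAntidiagonal.mem_antidiagonal] at hp
  have hfac := congrArg (Nat.cast : ℕ → S) (add_choose_mul_factorial_mul_factorial p.2 p.1)
  rw [add_comm, hp] at hfac
  push_cast at hfac
  linear_combination A p.1 * A p.2 * hfac

variable [Algebra ℚ S]

theorem isUnit_natCast_of_ne_zero {n : ℕ} (hn : n ≠ 0) : IsUnit (n : S) := by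
  simpa using ((Nat.cast_ne_zero.mpr hn : (n : ℚ) ≠ 0).isUnit.map (algebraMap ℚ S))

theorem eq_of_binomial_recurrence {X Y : ℕ → S}
    (hX : ∀ m, ∑ p ∈ antidiagonal m, m.choose p.1 * (X p.1 * X p.2) = 2 ^ m * X m)
    (hY : ∀ m, ∑ p ∈ antidiagonal m, m.choose p.1 * (Y p.1 * Y p.2) = 2 ^ m * Y m)
    (h0 : X 0 = Y 0) (h1 : X 1 = Y 1) : X = Y := by
  funext m
  induction m using Nat.strong_induction_on with
  | _ m ih =>
  obtain _ | _ | k := m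
  · exact h0
  · exact h1
  show X (k + 2) = Y (k + 2)
  have hidem : X 0 * X 0 = X 0 := by simpa using hX 0
  have hinner :
      ∑ p ∈ antidiagonal k, ((k + 2).choose (p.1 + 1) : S) * (X (p.1 + 1) * X (p.2 + 1)) =
        ∑ p ∈ antidiagonal k, ((k + 2).choose (p.1 + 1) : S) * (Y (p.1 + 1) * Y (p.2 + 1)) := by
    refine sum_congr rfl fun p hp => ?_
    rw [HasAntidiagonal.mem_antidiagonal] at hp
    rw [ih (p.1 + 1) (by omega), ih (p.2 + 1) (by omega)]
  have hXk := hX (k + 2)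
  have hYk := hY (k + 2)
  rw [Finset.Nat.sum_antidiagonal_add_two] at hXk hYk
  simp only [choose_zero_right, choose_self, cast_one, one_mul, ← h0] at hXk hYk
  have h4 : 2 ^ 2 ≤ 2 ^ (k + 2) := Nat.pow_le_pow_right two_pos (by omega)
  have hunit : IsUnit ((2 ^ (k + 2) * (2 ^ (k + 2) - 2) : ℕ) : S) :=
    isUnit_natCast_of_ne_zero (Nat.mul_ne_zero (by positivity) (by omega))
  refine sub_eq_zero.mp (hunit.mul_right_eq_zero.mp ?_)
  push_cast [Nat.cast_sub (by omega : 2 ≤ 2 ^ (k + 2))]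
  -- `(2ᵐ - 2e)(2ᵐ - 2 + 2e) = 2ᵐ(2ᵐ - 2)` for an idempotent `e`
  linear_combination (2 - 2 * X 0 - 2 ^ (k + 2)) * (hXk - hYk - hinner) +
    4 * (X (k + 2) - Y (k + 2)) * hidem

theorem mul_eq_choose_mul_of_sum_antidiagonal {A : ℕ → S}
    (hA : ∀ m, ∑ p ∈ antidiagonal m, A p.1 * A p.2 = 2 ^ m * A m) (i j : ℕ) :
    A i * A j = (i + j).choose i * A (i + j) := by
  have he : IsIdempotentElem (A 0) := by simpa [IsIdempotentElem] using hA 0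
  have h1 : A 0 * A 1 = A 1 := by
    have h := hA 1
    simp only [Nat.sum_antidiagonal_succ, antidiagonal_zero, sum_singleton, pow_one] at h
    apply (isUnit_natCast_of_ne_zero (S := S) two_ne_zero).mul_left_cancel
    push_cast
    linear_combination h
  have hexp : ∀ m, (m ! : S) * A m = A 0 * A 1 ^ m := congrFun
    (eq_of_binomial_recurrence (binomial_recurrence_factorial_mul hA)
      (binomial_recurrence_mul_pow he (A 1)) (by simp) (by simp [h1]))
  apply (isUnit_natCast_of_ne_zero (n := i ! * j !) (by positivity)).mul_left_cancel
  have hfac := congrArg (Nat.cast : ℕ → S) (add_choose_mul_factorial_mul_factorial j i)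
  rw [add_comm j i] at hfac
  push_cast at hfac ⊢
  linear_combination (j ! * A j) * hexp i + (A 0 * A 1 ^ i) * hexp j + A 1 ^ (i + j) * he.eq -
    hexp (i + j) - A (i + j) * hfac

end BinomialRecurrence

section CoeffSeries

variable {R : Type*} [CommRing R]

def coeffSeries (f : ℕ → PowerSeries R) (m : ℕ) : PowerSeries R :=
  mk fun n => coeff m (f n)

theorem coeff_coeffSeries_mul (f : ℕ → PowerSeries R) (i j n : ℕ) :
    coeff n (coeffSeries f i * coeffSeries f j) =
      ∑ k ∈ range (n + 1), coeff i (f k) * coeff j (f (n - k)) := by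
  simp [coeffSeries, coeff_mul, Nat.sum_antidiagonal_eq_sum_range_succ_mk]

theorem sum_antidiagonal_coeffSeries_mul (f : ℕ → PowerSeries R)
    (hweak : ∀ n, ∑ k ∈ range (n + 1), f k * f (n - k) = rescale (2 : R) (f n)) (m : ℕ) :
    ∑ p ∈ antidiagonal m, coeffSeries f p.1 * coeffSeries f p.2 = 2 ^ m * coeffSeries f m := by
  ext n
  have h := congrArg (coeff m) (hweak n)
  simp only [map_sum, coeff_mul, coeff_rescale] at h
  simp only [map_sum, coeff_coeffSeries_mul]
  rw [sum_comm, h, ← map_ofNat C 2, ← map_pow, coeff_C_mul, coeffSeries, coeff_mk]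

end CoeffSeries

theorem weak_convolution_family_is_convolution_family_general {R : Type*} [CommRing R]
    [Algebra ℚ R]
    (f : ℕ → PowerSeries R)
    (hweak : ∀ n, ∑ k ∈ Finset.range (n + 1), f k * f (n - k) =
      PowerSeries.rescale (2 : R) (f n)) :
    ∀ n, ∑ k ∈ Finset.range (n + 1),
        psubst (MvPowerSeries.X 0) (f k) * psubst (MvPowerSeries.X 1) (f (n - k)) =
      psubst (MvPowerSeries.X (0 : Fin 2) + MvPowerSeries.X 1) (f n) := by
  intro n
  ext e
  obtain ⟨i, j, rfl⟩ : ∃ i j, e = Finsupp.single 0 i + Finsupp.single 1 j :=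
    ⟨e 0, e 1, by ext s; fin_cases s <;> simp⟩
  have h01 : (0 : Fin 2) ≠ 1 := by decide
  rw [map_sum, coeff_psubst_X_add_X h01]
  simp only [coeff_psubst_X_mul_psubst_X h01]
  have h := congrArg (coeff n) (mul_eq_choose_mul_of_sum_antidiagonal
    (sum_antidiagonal_coeffSeries_mul f hweak) i j)
  rwa [coeff_coeffSeries_mul, ← map_natCast C, coeff_C_mul, coeffSeries, coeff_mk] at h

/-- Let `R` be a commutative ring containing the rationals in
which the only idempotents are `0` and `1`.  Then every weak convolution family
in `R[[x]]` is in fact a convolution family:  if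
`∑_{k=0}^n f_k(x) f_{n-k}(x) = f_n(2x)` in `R[[x]]` for all `n` (the substitution
`x ↦ 2x` being `rescale 2`), then `∑_{k=0}^n f_k(x) f_{n-k}(y) = f_n(x+y)` holds
in `R[[x,y]]` for all `n` (here `x` is variable `0` and `y` is variable `1`). -/
theorem weak_convolution_family_is_convolution_family {R : Type*} [CommRing R]
    [Algebra ℚ R]
    (hidem : ∀ e : R, e * e = e → e = 0 ∨ e = 1)
    (f : ℕ → PowerSeries R)
    (hweak : ∀ n, ∑ k ∈ Finset.range (n + 1), f k * f (n - k) =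
      PowerSeries.rescale (2 : R) (f n)) :
    ∀ n, ∑ k ∈ Finset.range (n + 1),
        psubst (MvPowerSeries.X 0) (f k) * psubst (MvPowerSeries.X 1) (f (n - k)) =
      psubst (MvPowerSeries.X (0 : Fin 2) + MvPowerSeries.X 1) (f n) :=
  weak_convolution_family_is_convolution_family_general f hweak
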